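/- Every context-free game with the bounded depth property has a weakly dominant one-pass strategy. -/

import Mathlib

namespace CFG

/-- Juliet's two kinds of moves. -/
inductive JMove : Type
  | call : JMove
  | read : JMove
deriving DecidableEq

/-- The extended alphabet Σ̂: `Sum.inl a` is the plain symbol `a`,
`Sum.inr a` is the "called" copy `â`. -/
abbrev HSym (A : Type) : Type := A ⊕ A

/-- The homomorphism ♮ deleting called symbols. -/
def flat {A : Type} (α : List (HSym A)) : List A :=
  α.filterMap (fun x => match x with | Sum.inl a => some a | Sum.inr _ => none)

/-- A context-free game: a (minimal) DFA `T` over `A` with finite state set `Q`,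
and a replacement relation `R` with nonempty replacement words and regular
replacement languages. -/
structure CFGame (A : Type) where
  Q : Type
  fintypeQ : Fintype Q
  T : DFA A Q
  minimal_reachable : ∀ q : Q, ∃ w : List A, T.evalFrom T.start w = q
  minimal_distinguishable :
    ∀ q q' : Q, (∀ w : List A, T.evalFrom q w ∈ T.accept ↔ T.evalFrom q' w ∈ T.accept) → q = q'
  R : A → List A → Prop
  R_ne : ∀ a v, R a v → v ≠ []
  R_regular : ∀ a, Language.IsRegular {v : List A | R a v}

variable {A : Type}

/-- `a` is a function symbol (its replacement language is nonempty). -/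
def CFGame.Fn (G : CFGame A) (a : A) : Prop := ∃ v, G.R a v

/-- One-pass strategies of Juliet (values at non-function symbols are irrelevant). -/
abbrev JStrat (A : Type) : Type := List (HSym A) → A → JMove

/-- Strategies of Romeo (values at non-function symbols are irrelevant). -/
abbrev RStrat (A : Type) : Type := List (HSym A) → A → List A

/-- Validity of a Romeo strategy: replacement words belong to the replacement language. -/
def CFGame.RValid (G : CFGame A) (τ : RStrat A) : Prop :=
  ∀ (α : List (HSym A)) (a : A), G.Fn a → G.R a (τ α a)

/-- Configurations, instrumented for depth bookkeeping: a history string, the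
remaining string where every symbol is annotated with its call-nesting level,
and the maximal nesting depth of the `Call` moves played so far. -/
abbrev Config (A : Type) : Type := List (HSym A) × List (A × ℕ) × ℕ

/-- One step of a play: Juliet reads or calls the current symbol according to `σ`
(a call is only possible at a function symbol); a call is answered by `τ`. -/
noncomputable def CFGame.step (G : CFGame A) (σ : JStrat A) (τ : RStrat A) :
    Config A → Config A :=
  fun c =>
    match c with
    | (α, [], d) => (α, [], d)
    | (α, (a, k) :: v, d) =>
      letI := Classical.propDecidable (G.Fn a ∧ σ α a = JMove.call)
      if G.Fn a ∧ σ α a = JMove.call then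
        (α ++ [Sum.inr a], (τ α a).map (fun b => (b, k + 1)) ++ v, max d (k + 1))
      else (α ++ [Sum.inl a], v, d)

/-- The play of `σ` against `τ` on input word `w`, as the sequence of its
configurations (the configuration stays fixed once the remaining string is empty). -/
noncomputable def CFGame.play (G : CFGame A) (σ : JStrat A) (τ : RStrat A)
    (w : List A) (n : ℕ) : Config A :=
  (G.step σ τ)^[n] ([], w.map (fun a => (a, 0)), 0)

/-- `σ` wins on `w`: against every (valid) Romeo strategy, the play on `w` is
finite and its final string belongs to the target language. -/
def CFGame.WinsOn (G : CFGame A) (σ : JStrat A) (w : List A) : Prop :=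
  ∀ τ : RStrat A, G.RValid τ →
    ∃ n : ℕ, (G.play σ τ w n).2.1 = [] ∧
      G.T.evalFrom G.T.start (flat (G.play σ τ w n).1) ∈ G.T.accept

/-- The winning set `W(σ)`. -/
def CFGame.W (G : CFGame A) (σ : JStrat A) : Set (List A) := {w | G.WinsOn σ w}

/-- `σ` is terminating: every play of `σ` is finite. -/
def CFGame.Terminating (G : CFGame A) (σ : JStrat A) : Prop :=
  ∀ τ : RStrat A, G.RValid τ → ∀ w : List A, ∃ n : ℕ, (G.play σ τ w n).2.1 = []

/-- `σ` is dominant: it dominates every one-pass strategy. -/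
def CFGame.Dominant (G : CFGame A) (σ : JStrat A) : Prop :=
  ∀ σ' : JStrat A, G.W σ' ⊆ G.W σ

/-- `σ` is undominated: no one-pass strategy strictly dominates it. -/
def CFGame.Undominated (G : CFGame A) (σ : JStrat A) : Prop :=
  ¬ ∃ σ' : JStrat A, G.W σ ⊂ G.W σ'

/-- `σ` is forgetful: its decisions only depend on `♮α` and the current symbol. -/
def CFGame.Forgetful (G : CFGame A) (σ : JStrat A) : Prop :=
  ∀ (α β : List (HSym A)) (a : A), G.Fn a → flat α = flat β → σ α a = σ β a

/-- `σ` is regular: the language `{αa : σ(α,a) = Call}` over Σ̂ is regular. -/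
def CFGame.RegularStrat (G : CFGame A) (σ : JStrat A) : Prop :=
  Language.IsRegular
    {x : List (HSym A) | ∃ (α : List (HSym A)) (a : A),
      G.Fn a ∧ σ α a = JMove.call ∧ x = α ++ [Sum.inl a]}

/-- One step of a strategy automaton of a strongly regular strategy, on the state
set `Q ∪ {Call}` (`none` is the absorbing state `Call`). -/
def optStep {Q : Type} (δA : Q → A → Option Q) (o : Option Q) (a : A) : Option Q :=
  o.bind (fun q => δA q a)

/-- `σ` is strongly regular: given by an automaton obtained from `T` by rerouting
some transitions to a new accepting state `Call`; Juliet plays `Call` on `(α,a)`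
iff the automaton maps `♮α·a` to `Call`. -/
def CFGame.StronglyRegular (G : CFGame A) (σ : JStrat A) : Prop :=
  ∃ δA : G.Q → A → Option G.Q,
    (∀ q a, δA q a = some (G.T.step q a) ∨ δA q a = none) ∧
    ∀ (α : List (HSym A)) (a : A), G.Fn a →
      (σ α a = JMove.call ↔
        List.foldl (optStep δA) (some G.T.start) (flat α ++ [a]) = none)

/-- Shortlex (strict) order on words. -/
def shortLex [LinearOrder A] (v w : List A) : Prop :=
  v.length < w.length ∨ (v.length = w.length ∧ List.Lex (· < ·) v w)

/-- `V <_sl W` for sets of words: the shortlex-least word of the symmetric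
difference belongs to `W`. -/
def slLT [LinearOrder A] (V W : Set (List A)) : Prop :=
  ∃ w : List A, w ∈ W ∧ w ∉ V ∧ ∀ v : List A, shortLex v w → (v ∈ V ↔ v ∈ W)

/-- `V ≤_sl W` for sets of words. -/
def slLE [LinearOrder A] (V W : Set (List A)) : Prop := V = W ∨ slLT V W

/-- `σ` is weakly dominant: `W(σ') ≤_sl W(σ)` for every one-pass strategy `σ'`. -/
def CFGame.WeaklyDominant [LinearOrder A] (G : CFGame A) (σ : JStrat A) : Prop :=
  ∀ σ' : JStrat A, slLE (G.W σ') (G.W σ)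

/-- The bounded depth property. -/
def CFGame.BoundedDepthProperty (G : CFGame A) : Prop :=
  ∃ B : ℕ → ℕ, ∀ σ : JStrat A, ∀ k : ℕ, ∃ σk : JStrat A,
    ∀ w ∈ G.W σ, w.length ≤ k →
      G.WinsOn σk w ∧
      ∀ τ : RStrat A, G.RValid τ → ∀ n : ℕ, (G.play σk τ w n).2.2 ≤ B w.length

/-- Prefix-freeness of all replacement languages. -/
def CFGame.PrefixFree (G : CFGame A) : Prop :=
  ∀ (a : A) (u v : List A), G.R a u → G.R a v → u <+: v → u = v

/-- Non-recursiveness: no function symbol can be derived from itself. -/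
def CFGame.NonRecursive (G : CFGame A) : Prop :=
  ¬ ∃ (n : ℕ) (f : ℕ → A), 1 ≤ n ∧ f 0 = f n ∧ (∀ i ≤ n, G.Fn (f i)) ∧
    ∀ k < n, ∃ v : List A, G.R (f k) v ∧ f (k + 1) ∈ v

/-- `σ` is almost undominated: only finitely many words are lost by `σ` but won
by some strategy dominating `σ`. -/
def CFGame.AlmostUndominated (G : CFGame A) (σ : JStrat A) : Prop :=
  Set.Finite {w : List A | ¬ G.WinsOn σ w ∧
    ∃ σ' : JStrat A, G.W σ ⊆ G.W σ' ∧ G.WinsOn σ' w}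

/-- Convergence of a sequence of one-pass strategies. -/
def Converges (G : CFGame A) (σs : ℕ → JStrat A) (σ : JStrat A) : Prop :=
  ∀ n : ℕ, ∃ k0 : ℕ, ∀ k ≥ k0, ∀ α : List (HSym A), α.length ≤ n →
    ∀ a : A, G.Fn a → σ α a = σs k α a

/-- The one-pass strategy defined by a DFA `M` over Σ̂ (a strategy automaton):
play `Call` on `(α,a)` iff `M` accepts `α·a`. -/
noncomputable def autoStrat {S : Type} (M : DFA (HSym A) S) : JStrat A :=
  fun α a =>
    letI := Classical.propDecidable (M.eval (α ++ [Sum.inl a]) ∈ M.accept)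
    if M.eval (α ++ [Sum.inl a]) ∈ M.accept then JMove.call else JMove.read

/-- `States(q; w, σ)`: the `T`-states `δ*(q, ♮α)` over final history strings `α`
of plays of `σ` on `w`. -/
def CFGame.StatesOf (G : CFGame A) (σ : JStrat A) (q : G.Q) (w : List A) : Set G.Q :=
  {q' | ∃ τ : RStrat A, G.RValid τ ∧ ∃ n : ℕ,
    (G.play σ τ w n).2.1 = [] ∧ G.T.evalFrom q (flat (G.play σ τ w n).1) = q'}

/-- `(p, a, S)` is an effect triple of `σ`. -/
def CFGame.IsEffectTriple (G : CFGame A) (σ : JStrat A) (t : G.Q × A × Set G.Q) : Prop :=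
  G.StatesOf σ t.1 [t.2.1] ⊆ t.2.2

/-- An effect triple is trivial if `δ(p,a) ∈ S`. -/
def CFGame.TrivialTriple (G : CFGame A) (t : G.Q × A × Set G.Q) : Prop :=
  G.T.step t.1 t.2.1 ∈ t.2.2

/-- The substrategy `σ^α`. -/
def subStrat (σ : JStrat A) (α : List (HSym A)) : JStrat A :=
  fun β a => σ (α ++ β) a

/-- The effect set `E(σ)`: all effect triples of all substrategies of `σ`. -/
def CFGame.EffectSet (G : CFGame A) (σ : JStrat A) : Set (G.Q × A × Set G.Q) :=
  {t | ∃ α : List (HSym A), G.IsEffectTriple (subStrat σ α) t}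

/-- The transition relation of the NFA `N_E` associated with a set `E` of effect
triples (state set `P(Q)`, initial state `{s}`, accepting states the subsets of `F`). -/
def CFGame.NEStep (G : CFGame A) (E : Set (G.Q × A × Set G.Q))
    (S : Set G.Q) (a : A) (S' : Set G.Q) : Prop :=
  ∀ p ∈ S, ∃ S'' : Set G.Q, S'' ⊆ S' ∧ (p, a, S'') ∈ E

/-- A strategy for the online word problem `OnlineNFA(N_E)`. -/
def CFGame.NEOnlineStrat (G : CFGame A) (E : Set (G.Q × A × Set G.Q))
    (ρ : List A → Set G.Q) : Prop :=
  ρ [] = {G.T.start} ∧ ∀ (w : List A) (a : A), G.NEStep E (ρ w) a (ρ (w ++ [a]))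

/-- The winning set of a strategy for `OnlineNFA(N_E)`. -/
def CFGame.NEWins (G : CFGame A) (ρ : List A → Set G.Q) : Set (List A) :=
  {w | ρ w ⊆ G.T.accept}

/-- A strategy automaton `M` is `(p,a,St)`-inducing. -/
def CFGame.Inducing (G : CFGame A) {S : Type} (M : DFA (HSym A) S)
    (p : G.Q) (a : A) (St : Set G.Q) : Prop :=
  G.Terminating (autoStrat M) ∧ G.Fn a ∧
  (∀ u : List A, G.R a u → G.StatesOf (autoStrat M) p u ⊆ St) ∧
  ∃ QA : G.Q → Set S,
    (∀ q ∈ St, ∀ q' ∈ St, q ≠ q' → Disjoint (QA q) (QA q')) ∧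
    ∀ u : List A, G.R a u → ∀ τ : RStrat A, G.RValid τ → ∀ n : ℕ,
      (G.play (autoStrat M) τ u n).2.1 = [] →
      ((∀ q ∈ St,
          (M.eval (G.play (autoStrat M) τ u n).1 ∈ QA q ↔
            G.T.evalFrom p (flat (G.play (autoStrat M) τ u n).1) = q)) ∧
        ∀ β : List (HSym A), β <+: (G.play (autoStrat M) τ u n).1 →
          β ≠ (G.play (autoStrat M) τ u n).1 → ∀ r ∈ St, M.eval β ∉ QA r)


/-!
Order the words by shortlex. The shortlex-greatest conceivable winning set `W*` (`greedyWinSet`)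
is built greedily: a word `w` belongs to `W*` iff some strategy reproduces the choices of `W*` on
all shortlex-smaller words and still wins on `w`. Every finite shortlex-initial segment of `W*` is
realized by some strategy, and by the bounded depth property by one whose plays on the words `w` of
`W*` in that segment have depth at most `B |w|`. A pointwise ultrafilter limit `σ` of these
strategies agrees with one of them along any finite stretch of a play; since depth is bounded
uniformly, the plays of `σ` on words of `W*` are finite (the number of pending symbols per nesting
level decreases lexicographically), hence winning. So `W(σ) ⊇ W*`, and maximality of the greedy
choice forces `W(σ) = W*`.
-/

open Filter

instance : Fintype JMove := ⟨{JMove.call, JMove.read}, fun m => by cases m <;> simp⟩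

section ShortLex

variable [LinearOrder A]

lemma shortLex_iff_shortlex {v w : List A} : shortLex v w ↔ List.Shortlex (· < ·) v w :=
  List.shortlex_def.symm

lemma shortLex_trans {u v w : List A} (h₁ : shortLex u v) (h₂ : shortLex v w) :
    shortLex u w := by
  rcases h₁ with h₁ | ⟨e₁, l₁⟩ <;> rcases h₂ with h₂ | ⟨e₂, l₂⟩
  · exact Or.inl (h₁.trans h₂)
  · exact Or.inl (e₂ ▸ h₁)
  · exact Or.inl (e₁ ▸ h₂)
  · exact Or.inr ⟨e₁.trans e₂, List.lex_trans lt_trans l₁ l₂⟩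

lemma shortLex_irrefl (w : List A) : ¬ shortLex w w := by
  rw [shortLex_iff_shortlex]
  exact Std.Irrefl.irrefl w

lemma eq_of_not_shortLex {v w : List A} (h₁ : ¬ shortLex v w) (h₂ : ¬ shortLex w v) : v = w := by
  rw [shortLex_iff_shortlex] at h₁ h₂
  exact Std.Trichotomous.trichotomous v w h₁ h₂

variable [Finite A]

lemma finite_setOf_shortLex (w : List A) : {v : List A | shortLex v w}.Finite :=
  (List.finite_length_le A w.length).subset fun v (h : shortLex v w) => by
    change v.length ≤ w.length
    rcases h with h | ⟨h, -⟩ <;> omega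

noncomputable def shortLexRank (w : List A) : ℕ := {v : List A | shortLex v w}.ncard

lemma shortLexRank_lt_of_shortLex {v w : List A} (h : shortLex v w) :
    shortLexRank v < shortLexRank w :=
  Set.ncard_lt_ncard ⟨fun _ hu => shortLex_trans hu h, fun hsub => shortLex_irrefl v (hsub h)⟩
    (finite_setOf_shortLex w)

lemma shortLexRank_lt_iff {v w : List A} : shortLexRank v < shortLexRank w ↔ shortLex v w := by
  refine ⟨fun h => ?_, shortLexRank_lt_of_shortLex⟩
  by_contra hvw
  rcases eq_or_ne v w with rfl | hne
  · exact lt_irrefl _ h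
  · have hwv : shortLex w v := by_contra fun hwv => hne (eq_of_not_shortLex hvw hwv)
    exact (shortLexRank_lt_of_shortLex hwv).not_gt h

lemma shortLexRank_injective : Function.Injective (shortLexRank (A := A)) := fun v w h => by
  refine eq_of_not_shortLex (fun hvw => ?_) (fun hwv => ?_)
  · exact (shortLexRank_lt_of_shortLex hvw).ne h
  · exact (shortLexRank_lt_of_shortLex hwv).ne h.symm

lemma wellFounded_shortLex : WellFounded (shortLex (A := A)) :=
  Subrelation.wf shortLexRank_lt_of_shortLex (InvImage.wf _ wellFounded_lt)

end ShortLex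

section Greedy

variable [LinearOrder A] [Finite A] (G : CFGame A)

noncomputable def CFGame.greedyWinSet : Set (List A) :=
  {w | wellFounded_shortLex.fix (fun w ih => ∃ σ : JStrat A,
    (∀ v (hv : shortLex v w), (ih v hv ↔ G.WinsOn σ v)) ∧ G.WinsOn σ w) w}

lemma CFGame.mem_greedyWinSet_iff {w : List A} :
    w ∈ G.greedyWinSet ↔ ∃ σ : JStrat A,
      (∀ v, shortLex v w → (v ∈ G.greedyWinSet ↔ G.WinsOn σ v)) ∧ G.WinsOn σ w := by
  rw [CFGame.greedyWinSet, Set.mem_ofPred_eq, WellFounded.fix_eq]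
  rfl

lemma CFGame.exists_agree_of_agree_below {σ : JStrat A} {w : List A}
    (hσ : ∀ v, shortLex v w → (v ∈ G.greedyWinSet ↔ G.WinsOn σ v)) :
    ∃ σ' : JStrat A, ∀ v, (shortLex v w ∨ v = w) → (v ∈ G.greedyWinSet ↔ G.WinsOn σ' v) := by
  by_cases hw : w ∈ G.greedyWinSet
  · obtain ⟨σ', hbelow, hwin⟩ := (G.mem_greedyWinSet_iff).1 hw
    exact ⟨σ', fun v hv => hv.elim (hbelow v) fun h => h ▸ iff_of_true hw hwin⟩
  · refine ⟨σ, fun v hv => hv.elim (hσ v) fun h => h ▸ iff_of_false hw fun hwin => ?_⟩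
    exact hw ((G.mem_greedyWinSet_iff).2 ⟨σ, hσ, hwin⟩)

lemma CFGame.exists_agree_of_shortLexRank_lt (n : ℕ) :
    ∃ σ : JStrat A, ∀ v, shortLexRank v < n → (v ∈ G.greedyWinSet ↔ G.WinsOn σ v) := by
  induction n with
  | zero => exact ⟨fun _ _ => JMove.read, fun v hv => absurd hv (Nat.not_lt_zero _)⟩
  | succ n ih =>
    obtain ⟨σ, hσ⟩ := ih
    by_cases hn : ∃ m : List A, shortLexRank m = n
    · obtain ⟨m, rfl⟩ := hn
      obtain ⟨σ', hσ'⟩ := G.exists_agree_of_agree_below fun v hv => hσ v (shortLexRank_lt_iff.2 hv)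
      refine ⟨σ', fun v hv => hσ' v ?_⟩
      rcases Nat.lt_succ_iff_lt_or_eq.1 hv with hv | hv
      exacts [Or.inl (shortLexRank_lt_iff.1 hv), Or.inr (shortLexRank_injective hv)]
    · refine ⟨σ, fun v hv => hσ v ?_⟩
      exact lt_of_le_of_ne (Nat.lt_succ_iff.1 hv) fun h => hn ⟨v, h⟩

/-- The shortlex-first word won by `σ` outside `greedyWinSet` would have been chosen greedily. -/
lemma CFGame.agree_of_greedyWinSet_subset {σ : JStrat A} {D : Set (List A)}
    (hD : ∀ v ∈ D, ∀ u, shortLex u v → u ∈ D)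
    (hwin : ∀ v ∈ D, v ∈ G.greedyWinSet → G.WinsOn σ v) :
    ∀ v ∈ D, (v ∈ G.greedyWinSet ↔ G.WinsOn σ v) := by
  refine fun v => (wellFounded_shortLex (A := A)).induction
    (C := fun v => v ∈ D → (v ∈ G.greedyWinSet ↔ G.WinsOn σ v)) v fun v ih hv => ?_
  refine ⟨hwin v hv, fun hσ => (G.mem_greedyWinSet_iff).2 ⟨σ, fun u hu => ?_, hσ⟩⟩
  exact ih u hu (hD v hv u hu)

lemma CFGame.W_eq_greedyWinSet_of_subset {σ : JStrat A} (h : G.greedyWinSet ⊆ G.W σ) :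
    G.W σ = G.greedyWinSet :=
  Set.ext fun v => (G.agree_of_greedyWinSet_subset (D := Set.univ) (fun _ _ _ _ => trivial)
    (fun _ _ hv => h hv) v trivial).symm

lemma CFGame.slLE_W_greedyWinSet (σ : JStrat A) : slLE (G.W σ) G.greedyWinSet := by
  by_cases heq : G.W σ = G.greedyWinSet
  · exact Or.inl heq
  have hne : {v | ¬ (v ∈ G.W σ ↔ v ∈ G.greedyWinSet)}.Nonempty := by
    by_contra hempty
    exact heq (Set.ext fun v => not_not.1 fun hv => hempty ⟨v, hv⟩)
  obtain ⟨m, hm, hmin⟩ := wellFounded_shortLex.has_min _ hne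
  have hbelow : ∀ v, shortLex v m → (v ∈ G.greedyWinSet ↔ G.WinsOn σ v) :=
    fun v hv => (not_not.1 fun h => hmin v h hv).symm
  have hmg : m ∈ G.greedyWinSet := by
    by_contra hmg
    exact hmg ((G.mem_greedyWinSet_iff).2 ⟨σ, hbelow, not_not.1 fun hσ => hm (iff_of_false hσ hmg)⟩)
  exact Or.inr ⟨m, hmg, fun hσ => hm (iff_of_true hσ hmg), fun v hv => (hbelow v hv).symm⟩

end Greedy

section Plays

variable (G : CFGame A) (τ : RStrat A) (w : List A)

lemma CFGame.play_succ (σ : JStrat A) (n : ℕ) :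
    G.play σ τ w (n + 1) = G.step σ τ (G.play σ τ w n) :=
  Function.iterate_succ_apply' _ _ _

section Step

variable {σ : JStrat A} {α : List (HSym A)} {a : A} {k : ℕ} {v : List (A × ℕ)} {d : ℕ}

lemma CFGame.step_cons_of_call (h : G.Fn a ∧ σ α a = JMove.call) :
    G.step σ τ (α, (a, k) :: v, d) =
      (α ++ [Sum.inr a], (τ α a).map (fun b => (b, k + 1)) ++ v, max d (k + 1)) :=
  if_pos h

lemma CFGame.step_cons_of_not_call (h : ¬ (G.Fn a ∧ σ α a = JMove.call)) :
    G.step σ τ (α, (a, k) :: v, d) = (α ++ [Sum.inl a], v, d) :=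
  if_neg h

end Step

lemma CFGame.step_of_remaining_nil {σ : JStrat A} {c : Config A} (hc : c.2.1 = []) :
    G.step σ τ c = c := by
  obtain ⟨α, rem, d⟩ := c
  subst hc
  rfl

lemma CFGame.step_congr {σ σ' : JStrat A} {c : Config A} (h : σ' c.1 = σ c.1) :
    G.step σ' τ c = G.step σ τ c := by
  obtain ⟨α, _ | ⟨⟨a, k⟩, v⟩, d⟩ := c
  · rfl
  · simp only at h
    simp only [CFGame.step]
    rw [h]

lemma CFGame.play_congr {σ σ' : JStrat A} {N : ℕ}
    (h : ∀ n < N, σ' (G.play σ τ w n).1 = σ (G.play σ τ w n).1) :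
    ∀ n ≤ N, G.play σ' τ w n = G.play σ τ w n := by
  intro n hn
  induction n with
  | zero => rfl
  | succ n ih =>
    rw [G.play_succ, G.play_succ, ih (by omega), G.step_congr τ (h n hn)]

lemma CFGame.play_eq_of_remaining_nil {σ : JStrat A} {n m : ℕ}
    (hn : (G.play σ τ w n).2.1 = []) (hnm : n ≤ m) : G.play σ τ w m = G.play σ τ w n := by
  induction m, hnm using Nat.le_induction with
  | base => rfl
  | succ m _ ih =>
    rw [G.play_succ, ih, G.step_of_remaining_nil τ hn]

lemma CFGame.play_eq_of_remaining_nil_of_remaining_nil {σ : JStrat A} {n m : ℕ}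
    (hn : (G.play σ τ w n).2.1 = []) (hm : (G.play σ τ w m).2.1 = []) :
    G.play σ τ w n = G.play σ τ w m := by
  rcases le_total n m with h | h
  exacts [(G.play_eq_of_remaining_nil τ w hn h).symm, G.play_eq_of_remaining_nil τ w hm h]

end Plays

section Termination

variable (G : CFGame A) (σ : JStrat A) (τ : RStrat A) (w : List A)

/-- Termination measure: pending symbols per nesting level, outermost level most significant. -/
def levelCount (D : ℕ) (l : List (A × ℕ)) : Lex (Fin (D + 1) → ℕ) :=
  toLex fun j => l.countP fun x => x.2 = (j : ℕ)

lemma levelCount_lt {D k : ℕ} (hk : k ≤ D) (a : A) (u : List A) (v : List (A × ℕ)) :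
    levelCount D (u.map (fun b => (b, k + 1)) ++ v) < levelCount D ((a, k) :: v) := by
  refine ⟨⟨k, Nat.lt_succ_of_le hk⟩, fun j hj => ?_, ?_⟩
  · have hj : (j : ℕ) < k := hj
    have hj₁ : k + 1 ≠ j := by omega
    have hj₂ : k ≠ j := by omega
    simp [levelCount, List.countP_append, List.countP_map, Function.comp_def, hj₁, hj₂]
  · simp [levelCount, List.countP_append, List.countP_map, Function.comp_def]

lemma CFGame.step_level_le_depth {c : Config A} (hc : ∀ x ∈ c.2.1, x.2 ≤ c.2.2) :
    ∀ x ∈ (G.step σ τ c).2.1, x.2 ≤ (G.step σ τ c).2.2 := by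
  obtain ⟨α, _ | ⟨⟨a, k⟩, v⟩, d⟩ := c
  · exact hc
  simp only [List.mem_cons, forall_eq_or_imp] at hc
  by_cases hcall : G.Fn a ∧ σ α a = JMove.call
  · rw [G.step_cons_of_call τ hcall]
    simp only [List.mem_append, List.mem_map]
    rintro x (⟨b, -, rfl⟩ | hx)
    · exact le_max_right _ _
    · exact (hc.2 x hx).trans (le_max_left _ _)
  · rw [G.step_cons_of_not_call τ hcall]
    exact hc.2

lemma CFGame.play_level_le_depth (n : ℕ) :
    ∀ x ∈ (G.play σ τ w n).2.1, x.2 ≤ (G.play σ τ w n).2.2 := by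
  induction n with
  | zero =>
    intro x hx
    obtain ⟨a, -, rfl⟩ := List.mem_map.1 hx
    exact le_rfl
  | succ n ih =>
    rw [G.play_succ]
    exact G.step_level_le_depth σ τ ih

lemma CFGame.levelCount_step_lt {D : ℕ} {c : Config A} (hc : c.2.1 ≠ [])
    (hlevel : ∀ x ∈ c.2.1, x.2 ≤ D) :
    levelCount D (G.step σ τ c).2.1 < levelCount D c.2.1 := by
  obtain ⟨α, _ | ⟨⟨a, k⟩, v⟩, d⟩ := c
  · exact absurd rfl hc
  have hk : k ≤ D := hlevel (a, k) List.mem_cons_self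
  by_cases hcall : G.Fn a ∧ σ α a = JMove.call
  · rw [G.step_cons_of_call τ hcall]
    exact levelCount_lt hk a _ v
  · rw [G.step_cons_of_not_call τ hcall]
    exact levelCount_lt hk a [] v

lemma CFGame.exists_remaining_nil_of_depth_le {D : ℕ} (hD : ∀ n, (G.play σ τ w n).2.2 ≤ D) :
    ∃ n, (G.play σ τ w n).2.1 = [] := by
  by_contra! hne
  obtain ⟨n, hn⟩ := WellFounded.not_rel_apply_succ (r := (· < ·))
    fun n => levelCount D (G.play σ τ w n).2.1
  refine hn ?_
  rw [G.play_succ]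
  exact G.levelCount_step_lt σ τ (hne n) fun x hx =>
    (G.play_level_le_depth σ τ w n x hx).trans (hD n)

end Termination

lemma _root_.Ultrafilter.exists_forall_eventually_eq {ι α β : Type*} [Finite β] (U : Ultrafilter ι)
    (f : ι → α → β) : ∃ g : α → β, ∀ x, ∀ᶠ i in U, f i x = g x := by
  choose g hg using fun x => (U.map fun i => f i x).eq_pure_of_finite
  refine ⟨g, fun x => ?_⟩
  have hx : {b | b = g x} ∈ U.map fun i => f i x := by
    rw [hg x]
    exact rfl
  exact hx

section Limit

variable (G : CFGame A) {ι : Type*} {l : Filter ι} {Θ : ι → JStrat A} {σ : JStrat A}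

lemma CFGame.eventually_play_eq (hσ : ∀ α, ∀ᶠ i in l, Θ i α = σ α) (τ : RStrat A) (w : List A)
    (N : ℕ) : ∀ᶠ i in l, ∀ n ≤ N, G.play (Θ i) τ w n = G.play σ τ w n :=
  ((eventually_all_finset (Finset.range N)).2 fun _ _ => hσ _).mono fun _ hi =>
    G.play_congr τ w fun n hn => hi n (Finset.mem_range.2 hn)

lemma CFGame.winsOn_of_eventually [l.NeBot] (hσ : ∀ α, ∀ᶠ i in l, Θ i α = σ α) {w : List A}
    (D : ℕ) (h : ∀ᶠ i in l, G.WinsOn (Θ i) w ∧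
      ∀ τ : RStrat A, G.RValid τ → ∀ n, (G.play (Θ i) τ w n).2.2 ≤ D) :
    G.WinsOn σ w := by
  intro τ hτ
  have hdepth : ∀ n, (G.play σ τ w n).2.2 ≤ D := fun n => by
    obtain ⟨i, ⟨-, hi⟩, hplay⟩ := (h.and (G.eventually_play_eq hσ τ w n)).exists
    rw [← hplay n le_rfl]
    exact hi τ hτ n
  obtain ⟨N, hN⟩ := G.exists_remaining_nil_of_depth_le σ τ w hdepth
  obtain ⟨i, ⟨hwin, -⟩, hplay⟩ := (h.and (G.eventually_play_eq hσ τ w N)).exists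
  obtain ⟨M, hM, hacc⟩ := hwin τ hτ
  refine ⟨N, hN, ?_⟩
  rw [← hplay N le_rfl] at hN ⊢
  rwa [G.play_eq_of_remaining_nil_of_remaining_nil τ w hN hM]

end Limit

lemma CFGame.exists_bounded_depth_winsOn_greedyWinSet [LinearOrder A] [Finite A] (G : CFGame A)
    (hG : G.BoundedDepthProperty) :
    ∃ B : ℕ → ℕ, ∀ n, ∃ σ : JStrat A, ∀ v ∈ G.greedyWinSet, shortLexRank v < n →
      G.WinsOn σ v ∧ ∀ τ : RStrat A, G.RValid τ → ∀ m, (G.play σ τ v m).2.2 ≤ B v.length := by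
  obtain ⟨B, hB⟩ := hG
  refine ⟨B, fun n => ?_⟩
  obtain ⟨σ, hσ⟩ := G.exists_agree_of_shortLexRank_lt n
  obtain ⟨k, hk⟩ := (((Set.finite_Iio n).preimage
    (shortLexRank_injective (A := A)).injOn).image List.length).bddAbove
  obtain ⟨σk, hσk⟩ := hB σ k
  exact ⟨σk, fun v hv hvn => hσk v ((hσ v hvn).1 hv) (hk ⟨v, hvn, rfl⟩)⟩

theorem statement2 {A : Type} [Fintype A] [LinearOrder A] (G : CFGame A)
    (h : G.BoundedDepthProperty) :
    ∃ σ : JStrat A, G.WeaklyDominant σ := by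
  obtain ⟨B, hB⟩ := G.exists_bounded_depth_winsOn_greedyWinSet h
  choose Θ hΘ using hB
  obtain ⟨σ, hσ⟩ := (hyperfilter ℕ).exists_forall_eventually_eq Θ
  have hgreedy : G.greedyWinSet ⊆ G.W σ := fun v hv =>
    G.winsOn_of_eventually hσ (B v.length) <|
      ((Nat.cofinite_eq_atTop ▸ eventually_gt_atTop (shortLexRank v)).filter_mono
        hyperfilter_le_cofinite).mono fun n hn => hΘ n v hv hn
  exact ⟨σ, fun σ' => G.W_eq_greedyWinSet_of_subset hgreedy ▸ G.slLE_W_greedyWinSet σ'⟩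

end CFG
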